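/- Let Ω, c ∈ ℝ^4 satisfy ⟨Ω,Ω⟩ > 0, ⟨c,c⟩ > 0 and ⟨c,Ω⟩ > 0. Then the function f(t) = ⟨c, Ω + t·c⟩^2 / ⟨Ω + t·c, Ω + t·c⟩ is well defined and differentiable on a neighborhood of t = 0, and f′(0) = (2·⟨c,Ω⟩ / ⟨Ω,Ω⟩^2) · ( ⟨Ω,Ω⟩·⟨c,c⟩ − ⟨c,Ω⟩^2 ). In particular f′(0) ≤ 0, with f′(0) = 0 if and only if Ω and c are linearly dependent. -/

import Mathlib

/-- The Minkowski (Lorentzian) bilinear form of signature `(1,3)` on `ℝ⁴`. -/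
noncomputable def mink (x y : Fin 4 → ℝ) : ℝ :=
  x 0 * y 0 - x 1 * y 1 - x 2 * y 2 - x 3 * y 3

/-- The function `t ↦ ⟨c, Ω + t c⟩² / ⟨Ω + t c, Ω + t c⟩` from LeBrun's
first-variation computation. -/
noncomputable def ratioFn (Om c : Fin 4 → ℝ) (t : ℝ) : ℝ :=
  (mink c (Om + t • c))^2 / mink (Om + t • c) (Om + t • c)

/-- A vector Minkowski-orthogonal to a timelike vector has nonpositive norm. -/
lemma perp_nonpos (O w : Fin 4 → ℝ) (hO : 0 < mink O O) (hw : mink w O = 0) :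
    mink w w ≤ 0 := by
  simp only [mink] at *
  have h : w 0 * O 0 = w 1 * O 1 + w 2 * O 2 + w 3 * O 3 := by linarith
  have E2 : (w 0 * O 0) * (w 0 * O 0)
      = (w 1 * O 1 + w 2 * O 2 + w 3 * O 3) * (w 1 * O 1 + w 2 * O 2 + w 3 * O 3) := by
    rw [h]
  nlinarith [sq_nonneg (w 1 * O 2 - w 2 * O 1), sq_nonneg (w 1 * O 3 - w 3 * O 1),
    sq_nonneg (w 2 * O 3 - w 3 * O 2),
    mul_nonneg (by positivity : (0:ℝ) ≤ w 1 ^ 2 + w 2 ^ 2 + w 3 ^ 2) hO.le,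
    sq_nonneg (O 0), E2]

/-- A null vector Minkowski-orthogonal to a timelike vector is zero. -/
lemma perp_zero (O w : Fin 4 → ℝ) (hO : 0 < mink O O) (hw : mink w O = 0)
    (hww : mink w w = 0) (i : Fin 4) : w i = 0 := by
  have h0 : w 0 = 0 := by
    simp only [mink] at *
    have h : w 0 * O 0 = w 1 * O 1 + w 2 * O 2 + w 3 * O 3 := by linarith
    have E2 : (w 0 * O 0) * (w 0 * O 0)
        = (w 1 * O 1 + w 2 * O 2 + w 3 * O 3) * (w 1 * O 1 + w 2 * O 2 + w 3 * O 3) := by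
      rw [h]
    have hsq : w 0 * w 0 ≤ 0 := by
      nlinarith [sq_nonneg (w 1 * O 2 - w 2 * O 1), sq_nonneg (w 1 * O 3 - w 3 * O 1),
        sq_nonneg (w 2 * O 3 - w 3 * O 2),
        mul_nonneg (by positivity : (0:ℝ) ≤ w 1 ^ 2 + w 2 ^ 2 + w 3 ^ 2) hO.le,
        sq_nonneg (O 0), E2]
    nlinarith [mul_self_nonneg (w 0)]
  simp only [mink] at hww
  have h1 : w 1 = 0 := by
    nlinarith [mul_self_nonneg (w 1), mul_self_nonneg (w 2), mul_self_nonneg (w 3)]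
  have h2 : w 2 = 0 := by
    nlinarith [mul_self_nonneg (w 1), mul_self_nonneg (w 2), mul_self_nonneg (w 3)]
  have h3 : w 3 = 0 := by
    nlinarith [mul_self_nonneg (w 1), mul_self_nonneg (w 2), mul_self_nonneg (w 3)]
  fin_cases i <;> assumption

lemma ratio_eq (Om c : Fin 4 → ℝ) : ratioFn Om c = fun t =>
    (mink c Om + t * mink c c)^2 /
      (mink Om Om + 2*t*(mink c Om) + t^2 * mink c c) := by
  funext t
  simp only [ratioFn, mink, Pi.add_apply, Pi.smul_apply, smul_eq_mul]
  ring_nf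

/-- First variation: the function `ratioFn Om c` is differentiable near
`t = 0`, its derivative at `0` is
`(2⟨c,Ω⟩/⟨Ω,Ω⟩²)(⟨Ω,Ω⟩⟨c,c⟩ − ⟨c,Ω⟩²)`; in particular this derivative is
`≤ 0`, vanishing iff `Ω` and `c` are linearly dependent. -/
theorem first_variation (Om c : Fin 4 → ℝ)
    (hOm : 0 < mink Om Om) (hc : 0 < mink c c) (hcOm : 0 < mink c Om) :
    (∀ᶠ t in nhds (0 : ℝ), DifferentiableAt ℝ (ratioFn Om c) t) ∧
    HasDerivAt (ratioFn Om c)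
      (2 * mink c Om / (mink Om Om)^2 *
        (mink Om Om * mink c c - (mink c Om)^2)) 0 ∧
    2 * mink c Om / (mink Om Om)^2 *
        (mink Om Om * mink c c - (mink c Om)^2) ≤ 0 ∧
    (2 * mink c Om / (mink Om Om)^2 *
        (mink Om Om * mink c c - (mink c Om)^2) = 0 ↔
      ¬ LinearIndependent ℝ ![Om, c]) := by
  set a := mink c Om with ha
  set b := mink c c with hb
  set p := mink Om Om with hp
  have hp0 : p ≠ 0 := hOm.ne'
  -- reverse Cauchy–Schwarz via the orthogonal decomposition u = p • c - a • Om
  set w : Fin 4 → ℝ := p • c - a • Om with hwdef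
  have hwO : mink w Om = 0 := by
    simp only [hwdef, ha, hp, mink, Pi.sub_apply, Pi.smul_apply, smul_eq_mul]
    ring
  have hww : mink w w = p * (p * b - a^2) := by
    simp only [hwdef, ha, hb, hp, mink, Pi.sub_apply, Pi.smul_apply, smul_eq_mul]
    ring
  have hkey : p * b - a^2 ≤ 0 := by
    have := perp_nonpos Om w hOm hwO
    rw [hww] at this
    nlinarith
  refine ⟨?_, ?_, ?_, ?_⟩
  · -- eventual differentiability
    have hcont : Continuous (fun t : ℝ => p + 2*t*a + t^2*b) := by continuity
    have hval : (fun t : ℝ => p + 2*t*a + t^2*b) 0 ≠ 0 := by simpa using hp0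
    have hne : ∀ᶠ t in nhds (0:ℝ), (p + 2*t*a + t^2*b) ≠ 0 :=
      hcont.continuousAt.eventually_ne hval
    filter_upwards [hne] with t ht
    rw [ratio_eq]
    exact DifferentiableAt.div (by fun_prop) (by fun_prop) ht
  · -- the derivative
    have h1 : HasDerivAt (fun t : ℝ => a + t * b) b 0 := by
      simpa using ((hasDerivAt_id (0:ℝ)).mul_const b).const_add a
    have hg : HasDerivAt (fun t : ℝ => (a + t * b)^2) (2*a*b) 0 := by
      have := h1.pow 2
      norm_num at this
      exact this
    have h2 : HasDerivAt (fun t : ℝ => 2*t*a) (2*a) 0 := by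
      simpa [mul_comm, mul_assoc] using (((hasDerivAt_id (0:ℝ)).const_mul 2).mul_const a)
    have h3 : HasDerivAt (fun t : ℝ => t^2*b) 0 0 := by
      simpa using (hasDerivAt_pow 2 (0:ℝ)).mul_const b
    have hd : HasDerivAt (fun t : ℝ => p + 2*t*a + t^2*b) (2*a) 0 := by
      have := ((hasDerivAt_const (0:ℝ) p).add h2).add h3
      simp only [zero_add, add_zero] at this
      exact this
    have hne : (fun t : ℝ => p + 2*t*a + t^2*b) 0 ≠ 0 := by simpa using hp0
    have hq : HasDerivAt (fun t : ℝ => (a + t * b)^2 / (p + 2*t*a + t^2*b))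
        ((2*a*b * (p + 2*0*a + 0^2*b) - (a + 0*b)^2 * (2*a)) / (p + 2*0*a + 0^2*b)^2) 0 :=
      hg.div hd hne
    rw [ratio_eq]
    convert hq using 1
    field_simp
    ring
  · -- nonpositivity
    have hpos : 0 ≤ 2 * a / p^2 := by positivity
    exact mul_nonpos_of_nonneg_of_nonpos hpos hkey
  · -- equality iff linear dependence
    have hfac : 2 * a / p^2 > 0 := by positivity
    constructor
    · intro h
      have hz : p * b - a^2 = 0 := by
        rcases mul_eq_zero.mp h with h' | h'
        · exact absurd h' hfac.ne'
        · exact h'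
      have hww0 : mink w w = 0 := by rw [hww, hz, mul_zero]
      have hw0 : ∀ i, w i = 0 := perp_zero Om w hOm hwO hww0
      rw [linearIndependent_fin2]
      simp only [Matrix.cons_val_zero, Matrix.cons_val_one, Matrix.head_cons]
      push_neg
      intro hc0
      refine ⟨p / a, ?_⟩
      funext i
      have := hw0 i
      simp only [hwdef, Pi.sub_apply, Pi.smul_apply, smul_eq_mul] at this
      simp only [Pi.smul_apply, smul_eq_mul]
      field_simp
      linarith
    · intro h
      rw [linearIndependent_fin2] at h
      simp only [Matrix.cons_val_zero, Matrix.cons_val_one, Matrix.head_cons] at h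
      push_neg at h
      have hcne : c ≠ 0 := by
        intro h0
        have hb0 : b = 0 := by rw [hb, h0]; simp [mink]
        linarith
      obtain ⟨t, ht⟩ := h hcne
      · have hOmc : ∀ i, Om i = t * c i := by
          intro i
          have := congrFun ht i
          simpa [Pi.smul_apply, smul_eq_mul] using this.symm
        have hz : p * b - a^2 = 0 := by
          simp only [hp, ha, hb, mink, hOmc 0, hOmc 1, hOmc 2, hOmc 3]
          ring
        rw [hz, mul_zero]
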